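/- The odd divided difference operators satisfy the braid relation ∂_i ∂_{i+1} ∂_i = ∂_{i+1} ∂_i ∂_{i+1} as operators on SPol_n. -/

import Mathlib

/-! Both sides are `k`-linear, so it suffices to compare them on monomials, by induction on
the length. The Leibniz rule on a generator reads `∂(x_j g) = [j ∈ {i, i'}] g - x_{s j} ∂g`;
iterating it shows `∂ ∘ ∂ = 0`, and then the induction step for the braid relation reduces,
case by case on `j`, to `s_i s_{i+1} s_i = s_{i+1} s_i s_{i+1}`. -/

noncomputable section

/-- The defining relations of the skew polynomial ring: `x_i x_j = -x_j x_i` for `i ≠ j`. -/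
inductive SkewRel (k : Type*) [CommRing k] (n : ℕ) :
    FreeAlgebra k (Fin n) → FreeAlgebra k (Fin n) → Prop
  | skew (i j : Fin n) (h : i ≠ j) :
      SkewRel k n (FreeAlgebra.ι k i * FreeAlgebra.ι k j)
        (-(FreeAlgebra.ι k j * FreeAlgebra.ι k i))

/-- The ring of skew polynomials `SPol_n = k⟨x_1,…,x_n⟩/(x_i x_j + x_j x_i, i ≠ j)`. -/
abbrev SPol (k : Type*) [CommRing k] (n : ℕ) : Type _ := RingQuot (SkewRel k n)

/-- The generators `x_i` of the skew polynomial ring. -/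
def SPol.X (k : Type*) [CommRing k] (n : ℕ) (i : Fin n) : SPol k n :=
  RingQuot.mkAlgHom k (SkewRel k n) (FreeAlgebra.ι k i)

/-- The monomial `x_{l₁} ⋯ x_{l_r}` associated to a word `l` in the generators. -/
def SPol.mon (k : Type*) [CommRing k] (n : ℕ) (l : List (Fin n)) : SPol k n :=
  (l.map (SPol.X k n)).prod

/-- The homogeneous component of `SPol_n` spanned by the monomials in `m` generators;
these are the homogeneous elements of `ℤ`-degree `2m` for the grading with `|x_i| = 2`
(equivalently, of parity `m`). -/
def SPol.homog (k : Type*) [CommRing k] (n : ℕ) (m : ℕ) : Submodule k (SPol k n) :=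
  Submodule.span k {f | ∃ l : List (Fin n), l.length = m ∧ f = SPol.mon k n l}

/-- `D` is the odd divided difference operator for the simple transposition exchanging the
(adjacent) indices `i` and `i'`, where `s` is the algebra endomorphism permuting the
variables accordingly: `D` takes the value `1` on `x_i` and `x_{i'}` and `0` on the other
generators, and satisfies the twisted Leibniz rule
`∂(fg) = ∂(f)g + (-1)^m s(f) ∂(g)` for `f` homogeneous of `ℤ`-degree `2m`. -/
def IsOddDD (k : Type*) [CommRing k] (n : ℕ) (i i' : Fin n)
    (s : SPol k n →ₐ[k] SPol k n) (D : SPol k n →ₗ[k] SPol k n) : Prop :=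
  (∀ j : Fin n, s (SPol.X k n j) = SPol.X k n (Equiv.swap i i' j)) ∧
  (∀ j : Fin n, D (SPol.X k n j) = if j = i ∨ j = i' then 1 else 0) ∧
  (∀ (m : ℕ) (f g : SPol k n), f ∈ SPol.homog k n m →
      D (f * g) = D f * g + ((-1 : ℤ) ^ m) • (s f * D g))

namespace SPol

variable {k : Type*} [CommRing k] {n : ℕ}

theorem span_range_mon : Submodule.span k (Set.range (mon k n)) = ⊤ := by
  have hadjoin : Algebra.adjoin k (Set.range (X k n)) = ⊤ := by
    have : X k n = RingQuot.mkAlgHom k (SkewRel k n) ∘ FreeAlgebra.ι k := rfl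
    rw [this, Set.range_comp, ← AlgHom.map_adjoin, FreeAlgebra.adjoin_range_ι, Algebra.map_top,
      AlgHom.range_eq_top]
    exact RingQuot.mkAlgHom_surjective k (SkewRel k n)
  have hmon : Set.range (mon k n) = Submonoid.closure (Set.range (X k n)) := by
    have : mon k n = FreeMonoid.lift (X k n) ∘ FreeMonoid.ofList := by
      funext l
      simp [mon, FreeMonoid.lift_apply]
    rw [this, FreeMonoid.ofList.surjective.range_comp, ← MonoidHom.coe_mrange,
      FreeMonoid.mrange_lift]
  rw [hmon, ← Algebra.adjoin_eq_span, hadjoin, Algebra.top_toSubmodule]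

theorem linearMap_ext {M : Type*} [AddCommMonoid M] [Module k M] {f g : SPol k n →ₗ[k] M}
    (h : ∀ l, f (mon k n l) = g (mon k n l)) : f = g :=
  LinearMap.ext_on_range span_range_mon h

@[simp]
theorem mon_nil : mon k n [] = 1 := rfl

@[simp]
theorem mon_cons (j : Fin n) (l : List (Fin n)) : mon k n (j :: l) = X k n j * mon k n l :=
  List.prod_cons

theorem one_mem_homog_zero : (1 : SPol k n) ∈ homog k n 0 :=
  Submodule.subset_span ⟨[], rfl, rfl⟩

theorem X_mem_homog_one (j : Fin n) : X k n j ∈ homog k n 1 :=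
  Submodule.subset_span ⟨[j], rfl, by simp⟩

end SPol

namespace IsOddDD

open SPol

variable {k : Type*} [CommRing k] {n : ℕ} {i i' : Fin n} {s : SPol k n →ₐ[k] SPol k n}
  {D : SPol k n →ₗ[k] SPol k n}

theorem map_one (hD : IsOddDD k n i i' s D) : D 1 = 0 := by
  simpa using hD.2.2 0 1 1 one_mem_homog_zero

theorem map_X_mul (hD : IsOddDD k n i i' s D) (j : Fin n) (g : SPol k n) :
    D (X k n j * g) = (if j = i ∨ j = i' then g else 0) - X k n (Equiv.swap i i' j) * D g := by
  rw [hD.2.2 1 _ g (X_mem_homog_one j), hD.2.1 j, hD.1 j]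
  simp [ite_mul, sub_eq_add_neg]

theorem comp_self (hD : IsOddDD k n i i' s D) : D ∘ₗ D = 0 := by
  refine linearMap_ext fun l => ?_
  induction l with
  | nil => simp [hD.map_one]
  | cons j l ih =>
    simp only [LinearMap.comp_apply, LinearMap.zero_apply] at ih ⊢
    have hswap : Equiv.swap i i' j = i ∨ Equiv.swap i i' j = i' ↔ j = i ∨ j = i' := by
      simp only [Equiv.swap_apply_eq_iff, Equiv.swap_apply_left, Equiv.swap_apply_right, or_comm]
    simp only [mon_cons, hD.map_X_mul, map_sub, ih, hswap, apply_ite D, map_zero, mul_zero,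
      sub_zero, sub_self]

variable {i'' : Fin n} {s' : SPol k n →ₐ[k] SPol k n} {D' : SPol k n →ₗ[k] SPol k n}

theorem braid_X_mul (hD : IsOddDD k n i i' s D) (hD' : IsOddDD k n i' i'' s' D')
    (hii' : i ≠ i') (hi'i'' : i' ≠ i'') (hii'' : i ≠ i'') (j : Fin n) {g : SPol k n}
    (hg : D (D' (D g)) = D' (D (D' g))) :
    D (D' (D (X k n j * g))) = D' (D (D' (X k n j * g))) := by
  have hDD : D (D g) = 0 := LinearMap.congr_fun hD.comp_self g
  have hD'D' : D' (D' g) = 0 := LinearMap.congr_fun hD'.comp_self g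
  simp only [hD.map_X_mul, hD'.map_X_mul, map_sub, apply_ite D, apply_ite D', map_zero, hg, hDD,
    hD'D']
  obtain rfl | rfl | rfl | ⟨hji, hji', hji''⟩ :
      j = i ∨ j = i' ∨ j = i'' ∨ (j ≠ i ∧ j ≠ i' ∧ j ≠ i'') := by tauto
  · simp [Equiv.swap_apply_of_ne_of_ne, hii', hii'', hi'i'', hii''.symm, hi'i''.symm]
  · simp [Equiv.swap_apply_of_ne_of_ne, hii', hii'', hi'i'', hii'.symm, hii''.symm, hi'i''.symm]
    abel
  · simp [Equiv.swap_apply_of_ne_of_ne, hii', hii'', hii'.symm, hii''.symm, hi'i''.symm]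
  · simp [Equiv.swap_apply_of_ne_of_ne, hji, hji', hji'']

theorem braid (hD : IsOddDD k n i i' s D) (hD' : IsOddDD k n i' i'' s' D')
    (hii' : i ≠ i') (hi'i'' : i' ≠ i'') (hii'' : i ≠ i'') :
    D ∘ₗ D' ∘ₗ D = D' ∘ₗ D ∘ₗ D' := by
  refine linearMap_ext fun l => ?_
  induction l with
  | nil => simp [hD.map_one, hD'.map_one]
  | cons j l ih => simpa using hD.braid_X_mul hD' hii' hi'i'' hii'' j ih

end IsOddDD

/-- `∂_i ∂_{i+1} ∂_i = ∂_{i+1} ∂_i ∂_{i+1}` as operators on `SPol_n`. -/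
theorem odd_dd_braid (k : Type*) [CommRing k] (n : ℕ) (i i' i'' : Fin n)
    (h1 : (i' : ℕ) = (i : ℕ) + 1) (h2 : (i'' : ℕ) = (i' : ℕ) + 1)
    (s s' : SPol k n →ₐ[k] SPol k n) (D D' : SPol k n →ₗ[k] SPol k n)
    (hD : IsOddDD k n i i' s D) (hD' : IsOddDD k n i' i'' s' D') :
    D ∘ₗ D' ∘ₗ D = D' ∘ₗ D ∘ₗ D' := by
  refine hD.braid hD' ?_ ?_ ?_ <;> rw [Ne, Fin.ext_iff] <;> omega
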